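/- For each n ≥ 1 let p_n be a probability measure on the symmetric group S_n that is invariant under conjugation, and assume p_n({σ : σ(1)=1}) → 0 as n → ∞. Then lim_{n→∞} E_{p_n}[|D(σ)|]/n = 1/2, where |D(σ)| is the total number of descents of σ. -/

import Mathlib

noncomputable section

/-- `i ∈ D(σ)` for 1-based `i ∈ {1,…,n−1}`: `σ(i+1) < σ(i)`
(positions `i`, `i+1` are the 0-based indices `i−1`, `i`). -/
def descentAt {n : ℕ} (σ : Equiv.Perm (Fin n)) (i : ℕ) : Prop :=
  ∃ (h1 : i - 1 < n) (h2 : i < n), σ ⟨i, h2⟩ < σ ⟨i - 1, h1⟩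

/-- The probability of the event `P` under the probability mass function `p` on `S_n`. -/
def permProb {n : ℕ} (p : Equiv.Perm (Fin n) → ℝ) (P : Equiv.Perm (Fin n) → Prop) : ℝ :=
  ∑ σ, Set.indicator {σ' | P σ'} p σ

/-!
Conjugation invariance makes `P(σ a = a)` independent of `a`, and `P(σ a = b)` independent of
`b ≠ a`; the `n - 1` events `σ a = b`, `b ≠ a`, are disjoint, so each has probability at most
`1 / (n - 1)`. Conjugating by the transposition `(a b)` exchanges the values `σ a` and `σ b`
unless `σ` sends `a` or `b` into `{a, b}`, so `σ b < σ a` has probability `1/2` up to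
`P(σ 1 = 1) + 1 / (n - 1)`. Summing over the `n - 1` positions,
`E |D(σ)| / n = 1/2 + O(P(σ 1 = 1) + 1 / n)`.
-/

open Finset Equiv

section HitsPair

variable {α : Type*} [DecidableEq α]

/-- Off this event, conjugating `σ` by `swap a b` just exchanges the values `σ a` and `σ b`. -/
def HitsPair (σ : Perm α) (a b : α) : Prop :=
  σ a = a ∨ σ a = b ∨ σ b = a ∨ σ b = b

lemma hitsPair_swap_conj_iff (σ : Perm α) (a b : α) :
    HitsPair ((swap a b)⁻¹ * σ * swap a b) a b ↔ HitsPair σ a b := by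
  simp only [HitsPair, swap_inv, Perm.mul_apply, swap_apply_left, swap_apply_right,
    swap_apply_eq_iff]
  tauto

lemma swap_conj_apply_of_not_hitsPair {σ : Perm α} {a b : α}
    (h : ¬HitsPair σ a b) :
    ((swap a b)⁻¹ * σ * swap a b) a = σ b ∧ ((swap a b)⁻¹ * σ * swap a b) b = σ a := by
  simp only [HitsPair, not_or] at h
  simp only [swap_inv, Perm.mul_apply, swap_apply_left, swap_apply_right]
  exact ⟨swap_apply_of_ne_of_ne h.2.2.1 h.2.2.2, swap_apply_of_ne_of_ne h.1 h.2.1⟩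

end HitsPair

section PermProb

variable {n : ℕ} {p : Perm (Fin n) → ℝ}

lemma permProb_nonneg (hpos : ∀ σ, 0 ≤ p σ) (P : Perm (Fin n) → Prop) : 0 ≤ permProb p P :=
  sum_nonneg fun σ _ => Set.indicator_nonneg (fun σ _ => hpos σ) σ

lemma permProb_mono (hpos : ∀ σ, 0 ≤ p σ) {P Q : Perm (Fin n) → Prop} (hPQ : ∀ σ, P σ → Q σ) :
    permProb p P ≤ permProb p Q :=
  sum_le_sum fun σ _ => Set.indicator_le_indicator_of_subset hPQ hpos σ

lemma permProb_or_le (hpos : ∀ σ, 0 ≤ p σ) (P Q : Perm (Fin n) → Prop) :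
    permProb p (fun σ => P σ ∨ Q σ) ≤ permProb p P + permProb p Q := by
  rw [permProb, permProb, permProb, ← sum_add_distrib]
  refine sum_le_sum fun σ _ => ?_
  have h := congrFun (Set.indicator_union_add_inter p {σ | P σ} {σ | Q σ}) σ
  have h0 := Set.indicator_nonneg (s := {σ | P σ} ∩ {σ | Q σ}) (fun σ _ => hpos σ) σ
  simp only [Pi.add_apply] at h
  exact (le_add_of_nonneg_right h0).trans_eq h

lemma permProb_and_add_and_not (P Q : Perm (Fin n) → Prop) :
    permProb p (fun σ => P σ ∧ Q σ) + permProb p (fun σ => P σ ∧ ¬Q σ) = permProb p P := by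
  rw [permProb, permProb, permProb, ← sum_add_distrib]
  refine sum_congr rfl fun σ _ => ?_
  by_cases hP : P σ <;> by_cases hQ : Q σ <;> simp [hP, hQ]

lemma permProb_add_permProb_not (hsum : ∑ σ, p σ = 1) (P : Perm (Fin n) → Prop) :
    permProb p P + permProb p (fun σ => ¬P σ) = 1 := by
  rw [← hsum, permProb, permProb, ← sum_add_distrib]
  exact sum_congr rfl fun σ _ => congrFun (Set.indicator_self_add_compl {σ | P σ} p) σ

lemma permProb_conj (hinv : ∀ σ ρ : Perm (Fin n), p (ρ⁻¹ * σ * ρ) = p σ)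
    (ρ : Perm (Fin n)) (P : Perm (Fin n) → Prop) :
    permProb p (fun σ => P (ρ⁻¹ * σ * ρ)) = permProb p P :=
  Fintype.sum_equiv (MulAut.conj ρ⁻¹).toEquiv _ _ fun σ => by
    rw [MulEquiv.toEquiv_eq_coe, MulEquiv.coe_toEquiv, MulAut.conj_apply, inv_inv]
    simp [Set.indicator, hinv]

lemma sum_permProb_apply_eq (hsum : ∑ σ, p σ = 1) (a : Fin n) :
    ∑ b, permProb p (fun σ => σ a = b) = 1 := by
  classical
  simp only [permProb, Set.indicator_apply, Set.mem_ofPred_eq]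
  rw [sum_comm]
  simpa using hsum

lemma permProb_apply_self_eq (hinv : ∀ σ ρ : Perm (Fin n), p (ρ⁻¹ * σ * ρ) = p σ) (a b : Fin n) :
    permProb p (fun σ => σ a = a) = permProb p (fun σ => σ b = b) := by
  rw [← permProb_conj hinv (swap a b) (fun σ => σ b = b)]
  congr! 2 with σ
  simp [Perm.mul_apply, swap_apply_eq_iff]

lemma permProb_apply_eq_of_ne (hinv : ∀ σ ρ : Perm (Fin n), p (ρ⁻¹ * σ * ρ) = p σ)
    {a b c : Fin n} (hb : b ≠ a) (hc : c ≠ a) :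
    permProb p (fun σ => σ a = b) = permProb p (fun σ => σ a = c) := by
  rw [← permProb_conj hinv (swap b c) (fun σ => σ a = c)]
  congr! 2 with σ
  simp [Perm.mul_apply, swap_apply_eq_iff, swap_apply_of_ne_of_ne hb.symm hc.symm]

lemma permProb_apply_eq_le (hpos : ∀ σ, 0 ≤ p σ) (hsum : ∑ σ, p σ = 1)
    (hinv : ∀ σ ρ : Perm (Fin n), p (ρ⁻¹ * σ * ρ) = p σ) {a b : Fin n} (hab : b ≠ a) :
    permProb p (fun σ => σ a = b) ≤ 1 / ((n : ℝ) - 1) := by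
  have hn : 1 < n := by
    have := Fin.val_ne_iff.mpr hab
    omega
  rw [le_div_iff₀' (by rw [sub_pos]; exact_mod_cast hn)]
  calc ((n : ℝ) - 1) * permProb p (fun σ => σ a = b)
      = ∑ c ∈ univ.erase a, permProb p (fun σ => σ a = c) := by
        rw [sum_congr rfl fun c hc => permProb_apply_eq_of_ne hinv (ne_of_mem_erase hc) hab,
          sum_const, card_erase_of_mem (mem_univ a), card_univ, Fintype.card_fin, nsmul_eq_mul,
          Nat.cast_pred a.pos]
    _ ≤ ∑ c, permProb p (fun σ => σ a = c) :=
        sum_le_sum_of_subset_of_nonneg (erase_subset a univ) fun c _ _ => permProb_nonneg hpos _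
    _ = 1 := sum_permProb_apply_eq hsum a

lemma permProb_lt_and_not_hitsPair_comm (hinv : ∀ σ ρ : Perm (Fin n), p (ρ⁻¹ * σ * ρ) = p σ)
    (a b : Fin n) :
    permProb p (fun σ => ¬HitsPair σ a b ∧ σ b < σ a) =
      permProb p (fun σ => ¬HitsPair σ a b ∧ σ a < σ b) := by
  rw [← permProb_conj hinv (swap a b) (fun σ => ¬HitsPair σ a b ∧ σ a < σ b)]
  congr! 2 with σ
  rw [hitsPair_swap_conj_iff]
  by_cases h : HitsPair σ a b
  · simp [h]
  · obtain ⟨ha, hb⟩ := swap_conj_apply_of_not_hitsPair h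
    rw [ha, hb]

lemma abs_permProb_lt_sub_half_le (hpos : ∀ σ, 0 ≤ p σ) (hsum : ∑ σ, p σ = 1)
    (hinv : ∀ σ ρ : Perm (Fin n), p (ρ⁻¹ * σ * ρ) = p σ) {a b : Fin n} (hab : a ≠ b) :
    |permProb p (fun σ => σ b < σ a) - 1 / 2| ≤ permProb p (fun σ => HitsPair σ a b) / 2 := by
  have hasc : permProb p (fun σ => ¬HitsPair σ a b ∧ ¬σ b < σ a) =
      permProb p (fun σ => ¬HitsPair σ a b ∧ σ a < σ b) := by
    congr! 3 with σ
    exact not_lt.trans (σ.injective.ne hab).le_iff_lt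
  have hhalf : 2 * permProb p (fun σ => ¬HitsPair σ a b ∧ σ b < σ a) =
      permProb p (fun σ => ¬HitsPair σ a b) := by
    rw [two_mul]
    nth_rewrite 2 [permProb_lt_and_not_hitsPair_comm hinv]
    rw [← hasc]
    exact permProb_and_add_and_not _ _
  have htotal := permProb_add_permProb_not hsum (fun σ => HitsPair σ a b)
  have hlower : permProb p (fun σ => ¬HitsPair σ a b ∧ σ b < σ a) ≤
      permProb p (fun σ => σ b < σ a) := permProb_mono hpos fun σ h => h.2
  have hupper : permProb p (fun σ => σ b < σ a) ≤
      permProb p (fun σ => ¬HitsPair σ a b ∧ σ b < σ a) + permProb p (fun σ => HitsPair σ a b) :=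
    (permProb_mono hpos fun σ h => (em' (HitsPair σ a b)).imp (⟨·, h⟩) id).trans
      (permProb_or_le hpos _ _)
  rw [abs_le]
  constructor <;> linarith

lemma permProb_hitsPair_le (hpos : ∀ σ, 0 ≤ p σ) (hsum : ∑ σ, p σ = 1)
    (hinv : ∀ σ ρ : Perm (Fin n), p (ρ⁻¹ * σ * ρ) = p σ) {a b : Fin n} (hab : a ≠ b) (z : Fin n) :
    permProb p (fun σ => HitsPair σ a b) ≤
      2 * (permProb p (fun σ => σ z = z) + 1 / ((n : ℝ) - 1)) := by
  have h₁ := permProb_or_le hpos (fun σ => σ a = a) (fun σ => σ a = b ∨ σ b = a ∨ σ b = b)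
  have h₂ := permProb_or_le hpos (fun σ => σ a = b) (fun σ => σ b = a ∨ σ b = b)
  have h₃ := permProb_or_le hpos (fun σ => σ b = a) (fun σ => σ b = b)
  have hab' := permProb_apply_eq_le hpos hsum hinv hab.symm
  have hba := permProb_apply_eq_le hpos hsum hinv hab
  rw [permProb_apply_self_eq hinv a z] at h₁
  rw [permProb_apply_self_eq hinv b z] at h₃
  unfold HitsPair
  linarith

lemma descentAt_iff {σ : Perm (Fin n)} {i : ℕ} (hi : 1 ≤ i) (hin : i < n) :
    descentAt σ i ↔ σ ⟨i, hin⟩ < σ ⟨i - 1, by omega⟩ :=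
  ⟨fun ⟨_, _, h⟩ => h, fun h => ⟨_, hin, h⟩⟩

lemma mem_Ico_of_descentAt {σ : Perm (Fin n)} {i : ℕ} (h : descentAt σ i) : i ∈ Ico 1 n := by
  obtain ⟨_, hin, hlt⟩ := h
  refine mem_Ico.2 ⟨Nat.one_le_iff_ne_zero.2 fun hi => ?_, hin⟩
  subst hi
  exact lt_irrefl _ hlt

lemma sum_mul_ncard_descentAt (p : Perm (Fin n) → ℝ) :
    ∑ σ, p σ * ({i | descentAt σ i}.ncard : ℝ) =
      ∑ i ∈ Ico 1 n, permProb p (fun σ => descentAt σ i) := by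
  classical
  have hcard (σ : Perm (Fin n)) :
      {i | descentAt σ i} = ↑((Ico 1 n).filter fun i => descentAt σ i) := by
    ext i
    simpa using fun h => mem_Ico.1 (mem_Ico_of_descentAt h)
  simp only [permProb, Set.indicator_apply, Set.mem_ofPred_eq]
  rw [sum_comm]
  refine sum_congr rfl fun σ _ => ?_
  rw [hcard, Set.ncard_coe_finset, card_filter, Nat.cast_sum, mul_sum]
  exact sum_congr rfl fun i _ => by split_ifs <;> simp

lemma abs_permProb_descentAt_sub_half_le (hpos : ∀ σ, 0 ≤ p σ) (hsum : ∑ σ, p σ = 1)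
    (hinv : ∀ σ ρ : Perm (Fin n), p (ρ⁻¹ * σ * ρ) = p σ) (z : Fin n) {i : ℕ}
    (hi : 1 ≤ i) (hin : i < n) :
    |permProb p (fun σ => descentAt σ i) - 1 / 2| ≤
      permProb p (fun σ => σ z = z) + 1 / ((n : ℝ) - 1) := by
  have hab : (⟨i - 1, by omega⟩ : Fin n) ≠ ⟨i, hin⟩ := by
    rw [Ne, Fin.mk.injEq]
    omega
  simp_rw [descentAt_iff hi hin]
  linarith [abs_permProb_lt_sub_half_le hpos hsum hinv hab,
    permProb_hitsPair_le hpos hsum hinv hab z]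

lemma abs_sum_mul_ncard_descentAt_sub_le (hpos : ∀ σ, 0 ≤ p σ) (hsum : ∑ σ, p σ = 1)
    (hinv : ∀ σ ρ : Perm (Fin n), p (ρ⁻¹ * σ * ρ) = p σ) (z : Fin n) :
    |∑ σ, p σ * ({i | descentAt σ i}.ncard : ℝ) - ((n : ℝ) - 1) / 2| ≤
      ((n : ℝ) - 1) * permProb p (fun σ => σ z = z) + 1 := by
  have hcard : ((Ico 1 n).card : ℝ) = n - 1 := by
    rw [Nat.card_Ico, Nat.cast_pred z.pos]
  calc |∑ σ, p σ * ({i | descentAt σ i}.ncard : ℝ) - ((n : ℝ) - 1) / 2|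
      = |∑ i ∈ Ico 1 n, (permProb p (fun σ => descentAt σ i) - 1 / 2)| := by
        rw [sum_mul_ncard_descentAt, sum_sub_distrib, sum_const, nsmul_eq_mul, hcard]
        ring_nf
    _ ≤ ∑ i ∈ Ico 1 n, |permProb p (fun σ => descentAt σ i) - 1 / 2| := abs_sum_le_sum_abs _ _
    _ ≤ ∑ i ∈ Ico 1 n, (permProb p (fun σ => σ z = z) + 1 / ((n : ℝ) - 1)) :=
        sum_le_sum fun i hi => abs_permProb_descentAt_sub_half_le hpos hsum hinv z
          (mem_Ico.1 hi).1 (mem_Ico.1 hi).2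
    _ ≤ ((n : ℝ) - 1) * permProb p (fun σ => σ z = z) + 1 := by
        rw [sum_const, nsmul_eq_mul, hcard, mul_add, mul_one_div]
        gcongr
        exact div_self_le_one _

lemma abs_expectation_ncard_descentAt_div_sub_half_le (hpos : ∀ σ, 0 ≤ p σ)
    (hsum : ∑ σ, p σ = 1) (hinv : ∀ σ ρ : Perm (Fin n), p (ρ⁻¹ * σ * ρ) = p σ) (z : Fin n) :
    |(∑ σ, p σ * ({i | descentAt σ i}.ncard : ℝ)) / n - 1 / 2| ≤
      permProb p (fun σ => σ z = z) + 2 / n := by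
  set E := ∑ σ, p σ * ({i | descentAt σ i}.ncard : ℝ)
  set f := permProb p (fun σ => σ z = z)
  have hn : (0 : ℝ) < n := Nat.cast_pos.2 z.pos
  have hE := abs_sum_mul_ncard_descentAt_sub_le hpos hsum hinv z
  have hf := permProb_nonneg hpos (fun σ => σ z = z)
  rw [show E / n - 1 / 2 = (E - ((n : ℝ) - 1) / 2 - 1 / 2) / n by field_simp; ring,
    abs_div, abs_of_pos hn, div_le_iff₀ hn, add_mul, div_mul_cancel₀ _ hn.ne']
  calc |E - ((n : ℝ) - 1) / 2 - 1 / 2| ≤ |E - ((n : ℝ) - 1) / 2| + |1 / 2| := abs_sub _ _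
    _ ≤ f * n + 2 := by rw [abs_of_pos (by norm_num : (0 : ℝ) < 1 / 2)]; linarith

end PermProb

theorem stmt_16 (p : (n : ℕ) → Equiv.Perm (Fin n) → ℝ)
    (hpos : ∀ n, 1 ≤ n → ∀ σ, 0 ≤ p n σ)
    (hsum : ∀ n, 1 ≤ n → ∑ σ, p n σ = 1)
    (hinv : ∀ n, 1 ≤ n → ∀ σ ρ : Equiv.Perm (Fin n), p n (ρ⁻¹ * σ * ρ) = p n σ)
    (hfix : Filter.Tendsto
      (fun n => permProb (p n) (fun σ => ∀ h : 0 < n, σ ⟨0, h⟩ = ⟨0, h⟩))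
      Filter.atTop (nhds 0)) :
    Filter.Tendsto
      (fun n => (∑ σ : Equiv.Perm (Fin n),
          p n σ * (Set.ncard {i : ℕ | descentAt σ i} : ℝ)) / n)
      Filter.atTop (nhds (1 / 2)) := by
  have hbound : ∀ n ≥ 1, |(∑ σ : Equiv.Perm (Fin n),
      p n σ * (Set.ncard {i : ℕ | descentAt σ i} : ℝ)) / n - 1 / 2| ≤
      permProb (p n) (fun σ => ∀ h : 0 < n, σ ⟨0, h⟩ = ⟨0, h⟩) + 2 / n := fun n hn => by
    have hfixed : permProb (p n) (fun σ => ∀ h : 0 < n, σ ⟨0, h⟩ = ⟨0, h⟩) =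
        permProb (p n) (fun σ => σ ⟨0, hn⟩ = ⟨0, hn⟩) := by
      congr! 2 with σ
      exact forall_prop_of_true hn
    rw [hfixed]
    exact abs_expectation_ncard_descentAt_div_sub_half_le (hpos n hn) (hsum n hn) (hinv n hn) _
  rw [← tendsto_sub_nhds_zero_iff]
  refine squeeze_zero_norm' ((Filter.eventually_ge_atTop 1).mono hbound) ?_
  simpa using hfix.add (tendsto_const_div_atTop_nhds_zero_nat (2 : ℝ))
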